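/- If p₀, p₁, p₂, p₃ are four points in ℝ³ whose pairwise distances all equal t and whose convex hull contains the unit regular octahedron O, then t ≥ 2; i.e. the smallest regular tetrahedron containing a regular octahedron of edge 1 has edge length 2. -/

import Mathlib

/-- A point of `ℝ³` (as `EuclideanSpace ℝ (Fin 3)`) from its coordinates. -/
noncomputable def pt (x y z : ℝ) : EuclideanSpace ℝ (Fin 3) := WithLp.toLp 2 ![x, y, z]

/-- The vertex set of the unit regular octahedron. -/
noncomputable def octaVerts : Set (EuclideanSpace ℝ (Fin 3)) :=
  {pt (Real.sqrt 2 / 2) 0 0, pt (-(Real.sqrt 2 / 2)) 0 0,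
   pt 0 (Real.sqrt 2 / 2) 0, pt 0 (-(Real.sqrt 2 / 2)) 0,
   pt 0 0 (Real.sqrt 2 / 2), pt 0 0 (-(Real.sqrt 2 / 2))}

/-!
The octahedron contains the ball of radius `1 / √6` about the origin: by Cauchy–Schwarz that ball
lies in the `ℓ¹`-ball of radius `√2 / 2`, which is the convex hull of the vertices.
A regular simplex with `m` vertices `pᵢ`, edge `t` and centroid `c` satisfies
`2m ‖pᵢ - c‖² = (m - 1) t²` and lies in the half-spaces `2m ⟪y - c, pᵢ - c⟫ ≥ -t²`.
If it contains a ball of radius `r`, testing the `i`-th half-space at the point of the ball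
farthest in the direction `-(pᵢ - c)` and summing over `i` (the `pᵢ - c` sum to zero) gives
`2m (m - 1) r² ≤ t²`. With `m = 4` and `r = 1 / √6` this is `t ≥ 2`.
-/

open Finset Metric RealInnerProductSpace

theorem sum_dist_sq_eq_of_pairwise {X ι : Type*} [PseudoMetricSpace X] [Fintype ι] {p : ι → X}
    {t : ℝ} (hp : Pairwise fun i j ↦ dist (p i) (p j) = t) (i : ι) :
    ∑ j, dist (p i) (p j) ^ 2 = (Fintype.card ι - 1) * t ^ 2 := by
  classical
  rw [← add_sum_erase _ _ (mem_univ i), dist_self,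
    sum_congr rfl fun j hj ↦ by rw [hp (ne_of_mem_erase hj).symm], sum_const,
    card_erase_of_mem (mem_univ i), card_univ, nsmul_eq_mul,
    Nat.cast_pred (Fintype.card_pos_iff.2 ⟨i⟩)]
  ring

section RegularSimplex

variable {E ι : Type*} [NormedAddCommGroup E] [InnerProductSpace ℝ E] [Fintype ι]

theorem sum_sub_centroid_eq_zero [Nonempty ι] (p : ι → E) :
    ∑ i, (p i - univ.centroid ℝ p) = 0 := by
  have hm : (Fintype.card ι : ℝ) ≠ 0 := by positivity
  rw [sum_sub_distrib, sum_const, card_univ, centroid_def,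
    affineCombination_eq_linear_combination _ _ _
      (sum_centroidWeights_eq_one_of_nonempty ℝ _ univ_nonempty)]
  simp [← smul_sum, ← Nat.cast_smul_eq_nsmul ℝ, smul_smul, hm]

theorem sum_norm_sub_sq_eq [Nonempty ι] (p : ι → E) (y : E) :
    ∑ i, ‖y - p i‖ ^ 2 =
      Fintype.card ι * ‖y - univ.centroid ℝ p‖ ^ 2 + ∑ i, ‖p i - univ.centroid ℝ p‖ ^ 2 := by
  set c := univ.centroid ℝ p
  have h (i : ι) : ‖y - p i‖ ^ 2 = ‖y - c‖ ^ 2 - 2 * ⟪y - c, p i - c⟫ + ‖p i - c‖ ^ 2 := by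
    rw [← norm_sub_sq_real]; congr 2; abel
  have hinner : ∑ i, ⟪y - c, p i - c⟫ = 0 := by
    rw [← inner_sum, sum_sub_centroid_eq_zero, inner_zero_right]
  simp only [h, sum_add_distrib, sum_sub_distrib, ← mul_sum, hinner, sum_const, card_univ,
    nsmul_eq_mul]
  ring

variable {p : ι → E} {t : ℝ}

theorem two_mul_card_mul_norm_sub_centroid_sq [Nonempty ι]
    (hp : Pairwise fun i j ↦ dist (p i) (p j) = t) (i : ι) :
    2 * Fintype.card ι * ‖p i - univ.centroid ℝ p‖ ^ 2 = (Fintype.card ι - 1) * t ^ 2 := by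
  set m : ℝ := (Fintype.card ι : ℝ)
  set S := ∑ j, ‖p j - univ.centroid ℝ p‖ ^ 2
  have h (j : ι) : (m - 1) * t ^ 2 = m * ‖p j - univ.centroid ℝ p‖ ^ 2 + S := by
    rw [← sum_dist_sq_eq_of_pairwise hp j, ← sum_norm_sub_sq_eq]
    simp only [dist_eq_norm]
  have hS : 2 * S = (m - 1) * t ^ 2 := by
    have hm : m ≠ 0 := by positivity
    have := sum_congr rfl fun j (_ : j ∈ univ) ↦ h j
    simp only [sum_const, sum_add_distrib, ← mul_sum, card_univ, nsmul_eq_mul] at this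
    apply mul_left_cancel₀ hm
    linear_combination -this
  linear_combination -2 * h i - hS

theorem two_mul_card_mul_inner_sub_centroid [Nonempty ι]
    (hp : Pairwise fun i j ↦ dist (p i) (p j) = t) {i j : ι} (hij : i ≠ j) :
    2 * Fintype.card ι * ⟪p i - univ.centroid ℝ p, p j - univ.centroid ℝ p⟫ = -t ^ 2 := by
  have h : t ^ 2 = ‖(p i - univ.centroid ℝ p) - (p j - univ.centroid ℝ p)‖ ^ 2 := by
    rw [sub_sub_sub_cancel_right, ← dist_eq_norm, hp hij]
  rw [norm_sub_sq_real] at h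
  linear_combination (Fintype.card ι : ℝ) * h + two_mul_card_mul_norm_sub_centroid_sq hp i / 2
    + two_mul_card_mul_norm_sub_centroid_sq hp j / 2

theorem neg_sq_le_inner_sub_centroid_of_mem_convexHull [Nonempty ι]
    (hp : Pairwise fun i j ↦ dist (p i) (p j) = t) (i : ι) {x : E}
    (hx : x ∈ convexHull ℝ (Set.range p)) :
    -t ^ 2 ≤ 2 * Fintype.card ι * ⟪x - univ.centroid ℝ p, p i - univ.centroid ℝ p⟫ := by
  set c := univ.centroid ℝ p
  set f : E →ₗ[ℝ] ℝ := (2 * Fintype.card ι : ℝ) • innerₛₗ ℝ (p i - c)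
  have hf (y : E) : f y - f c = 2 * Fintype.card ι * ⟪y - c, p i - c⟫ := by
    rw [← map_sub]
    simp only [f, LinearMap.smul_apply, innerₛₗ_apply_apply, smul_eq_mul, real_inner_comm]
  have hvertex : Set.range p ⊆ {y | f c - t ^ 2 ≤ f y} := by
    rintro _ ⟨j, rfl⟩
    suffices -t ^ 2 ≤ 2 * Fintype.card ι * ⟪p j - c, p i - c⟫ by
      show f c - t ^ 2 ≤ f (p j); linarith [hf (p j)]
    rcases eq_or_ne j i with rfl | hji
    · rw [real_inner_self_eq_norm_sq]
      exact (neg_nonpos.2 (sq_nonneg t)).trans (by positivity)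
    · exact (two_mul_card_mul_inner_sub_centroid hp hji).ge
  have := convexHull_min hvertex (convex_halfSpace_ge f.isLinear _) hx
  linarith [this.out, hf x]

theorem mul_radius_sq_le_sq_of_closedBall_subset_convexHull [Nonempty ι]
    (hp : Pairwise fun i j ↦ dist (p i) (p j) = t) (ht : t ≠ 0) {x : E} {r : ℝ} (hr : 0 ≤ r)
    (hball : closedBall x r ⊆ convexHull ℝ (Set.range p)) :
    2 * Fintype.card ι * (Fintype.card ι - 1) * r ^ 2 ≤ t ^ 2 := by
  set m : ℝ := (Fintype.card ι : ℝ)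
  set c := univ.centroid ℝ p
  obtain ⟨i₀⟩ := ‹Nonempty ι›
  set R := ‖p i₀ - c‖
  have hR (i : ι) : ‖p i - c‖ = R := by
    have hm : 2 * m ≠ 0 := by positivity
    refine (pow_left_inj₀ (norm_nonneg _) (norm_nonneg _) two_ne_zero).1 (mul_left_cancel₀ hm ?_)
    rw [two_mul_card_mul_norm_sub_centroid_sq hp, two_mul_card_mul_norm_sub_centroid_sq hp]
  have hprobe (i : ι) : -t ^ 2 ≤ 2 * m * (⟪x - c, p i - c⟫ - r * R) := by
    have hmem : x - (r / R) • (p i - c) ∈ closedBall x r := by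
      rw [mem_closedBall, dist_eq_norm, sub_sub_cancel_left, norm_neg, norm_smul, hR,
        Real.norm_eq_abs, abs_div, abs_of_nonneg hr, abs_norm]
      rcases eq_or_ne R 0 with hR0 | hR0
      · simp [hR0, hr]
      · rw [div_mul_cancel₀ _ hR0]
    have := neg_sq_le_inner_sub_centroid_of_mem_convexHull hp i (hball hmem)
    rwa [sub_right_comm, inner_sub_left, real_inner_smul_left, real_inner_self_eq_norm_sq, hR,
      div_mul_eq_mul_div, mul_div_assoc, sq R, mul_self_div_self] at this
  have hm : 0 < m := by positivity
  have hsum : 2 * m * (r * R) ≤ t ^ 2 := by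
    have := sum_le_sum fun i (_ : i ∈ univ) ↦ hprobe i
    rw [← mul_sum, sum_sub_distrib, ← inner_sum, sum_sub_centroid_eq_zero, inner_zero_right,
      sum_const, sum_const, card_univ, nsmul_eq_mul, nsmul_eq_mul] at this
    nlinarith
  have hR₀ : 2 * m * R ^ 2 = (m - 1) * t ^ 2 := two_mul_card_mul_norm_sub_centroid_sq hp i₀
  refine le_of_mul_le_mul_left ?_ (by positivity : 0 < t ^ 2)
  calc t ^ 2 * (2 * m * (m - 1) * r ^ 2) = (2 * m * (r * R)) ^ 2 := by
        linear_combination (-2 * m * r ^ 2) * hR₀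
    _ ≤ (t ^ 2) ^ 2 := pow_le_pow_left₀ (by positivity) hsum 2
    _ = t ^ 2 * t ^ 2 := sq _

end RegularSimplex

theorem two_mul_le_of_closedBall_subset_convexHull {E ι : Type*} [NormedAddCommGroup E]
    [NormedSpace ℝ E] [Nontrivial E] [Finite ι] {p : ι → E} {t : ℝ} (ht : 0 ≤ t)
    (hp : Pairwise fun i j ↦ dist (p i) (p j) = t) {x : E} {r : ℝ} (hr : 0 ≤ r)
    (hball : closedBall x r ⊆ convexHull ℝ (Set.range p)) :
    2 * r ≤ t :=
  calc 2 * r = diam (closedBall x r) := (diam_closedBall_eq x hr).symm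
    _ ≤ diam (convexHull ℝ (Set.range p)) :=
      diam_mono hball (isBounded_convexHull.2 (Set.finite_range p).isBounded)
    _ = diam (Set.range p) := convexHull_diam _
    _ ≤ t := diam_le_of_forall_dist_le ht <| by
      rintro _ ⟨i, rfl⟩ _ ⟨j, rfl⟩
      rcases eq_or_ne i j with rfl | hij
      · rwa [dist_self]
      · exact (hp hij).le

theorem sum_smul_mem_convexHull_of_sum_abs_le {ι V : Type*} [Fintype ι] [Nonempty ι]
    [AddCommGroup V] [Module ℝ V] (e : ι → V) {c : ι → ℝ} (hc : ∑ i, |c i| ≤ 1) :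
    ∑ i, c i • e i ∈ convexHull ℝ (Set.range e ∪ Set.range (-e)) := by
  set K := convexHull ℝ (Set.range e ∪ Set.range (-e))
  have he (i : ι) : e i ∈ K := subset_convexHull ℝ _ (Or.inl ⟨i, rfl⟩)
  have hne (i : ι) : -e i ∈ K := subset_convexHull ℝ _ (Or.inr ⟨i, rfl⟩)
  obtain ⟨i₀⟩ := ‹Nonempty ι›
  have h0 : (0 : V) ∈ K := by
    simpa using convex_convexHull ℝ _ (he i₀) (hne i₀) (by norm_num : (0 : ℝ) ≤ 1 / 2)
      (by norm_num : (0 : ℝ) ≤ 1 / 2) (by norm_num)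
  -- the index `none` carries the slack weight `1 - ∑ i, |c i|`, on the point `0`
  let w : Option ι → ℝ := fun o ↦ o.elim (1 - ∑ i, |c i|) fun i ↦ |c i|
  let z : Option ι → V := fun o ↦ o.elim 0 fun i ↦ if 0 ≤ c i then e i else -e i
  have hwz : ∑ o, w o • z o = ∑ i, c i • e i := by
    rw [Fintype.sum_option]
    simp only [w, z, Option.elim, smul_zero, zero_add]
    refine sum_congr rfl fun i _ ↦ ?_
    split_ifs with hci
    · rw [abs_of_nonneg hci]
    · rw [abs_of_neg (not_le.1 hci), smul_neg, neg_smul, neg_neg]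
  rw [← hwz]
  refine (convex_convexHull ℝ _).sum_mem (fun o _ ↦ ?_) ?_ (fun o _ ↦ ?_)
  · cases o <;> simp [w, hc]
  · simp [w, Fintype.sum_option]
  · cases o with
    | none => exact h0
    | some i => dsimp only [z, Option.elim]; split_ifs; exacts [he i, hne i]

theorem neg_pt (x y z : ℝ) : -pt x y z = pt (-x) (-y) (-z) := by
  ext i; fin_cases i <;> simp [pt]

theorem closedBall_subset_convexHull_octaVerts :
    closedBall 0 (1 / √6) ⊆ convexHull ℝ octaVerts := by
  intro x hx
  set a := √2 / 2
  have ha : 0 < a := by positivity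
  let e : Fin 3 → EuclideanSpace ℝ (Fin 3) := ![pt a 0 0, pt 0 a 0, pt 0 0 a]
  have hverts : Set.range e ∪ Set.range (-e) ⊆ octaVerts := by
    rintro _ (⟨i, rfl⟩ | ⟨i, rfl⟩) <;> fin_cases i <;> simp [octaVerts, e, a, neg_pt]
  have hx_sum : x = ∑ i, (x i / a) • e i := by
    ext k
    fin_cases k <;> simp [e, pt, Fin.sum_univ_three, ha.ne']
  have hl1 : ∑ i, |x i / a| ≤ 1 := by
    have hx2 : ‖x‖ ^ 2 ≤ 1 / 6 := by
      calc ‖x‖ ^ 2 ≤ (1 / √6) ^ 2 :=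
            pow_le_pow_left₀ (norm_nonneg x) (mem_closedBall_zero_iff.1 hx) 2
        _ = 1 / 6 := by rw [div_pow, Real.sq_sqrt (by norm_num), one_pow]
    have hcs : (∑ i, |x i|) ^ 2 ≤ a ^ 2 := by
      calc (∑ i, |x i|) ^ 2 ≤ 3 * ∑ i, |x i| ^ 2 := by
            simpa using sq_sum_le_card_mul_sum_sq (s := univ) (f := fun i ↦ |x i|)
        _ = 3 * ‖x‖ ^ 2 := by simp [EuclideanSpace.real_norm_sq_eq]
        _ ≤ a ^ 2 := by rw [div_pow, Real.sq_sqrt (by norm_num)]; linarith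
    simp_rw [abs_div, abs_of_pos ha, ← sum_div]
    rw [div_le_one ha]
    exact (pow_le_pow_iff_left₀ (by positivity) ha.le two_ne_zero).1 hcs
  rw [hx_sum]
  exact convexHull_mono hverts (sum_smul_mem_convexHull_of_sum_abs_le e hl1)

theorem min_edge_regular_tetrahedron_containing_unit_octahedron
    (t : ℝ) (p : Fin 4 → EuclideanSpace ℝ (Fin 3))
    (hdist : ∀ i j, i ≠ j → dist (p i) (p j) = t)
    (hocta : convexHull ℝ octaVerts ⊆ convexHull ℝ (Set.range p)) :
    t ≥ 2 := by
  have hp : Pairwise fun i j ↦ dist (p i) (p j) = t := fun i j ↦ hdist i j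
  have hball := closedBall_subset_convexHull_octaVerts.trans hocta
  have hr : (0 : ℝ) < 1 / √6 := by positivity
  have ht : 0 < t := by
    have := two_mul_le_of_closedBall_subset_convexHull
      (dist_nonneg.trans_eq (hdist 0 1 (by decide))) hp hr.le hball
    linarith
  have h := mul_radius_sq_le_sq_of_closedBall_subset_convexHull hp ht.ne' hr.le hball
  rw [div_pow, Real.sq_sqrt (by norm_num), Fintype.card_fin] at h
  nlinarith
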